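/- Let k ⊆ K be fields, let L be a field extension of K, let f_1,…,f_n ∈ L, and let A be the K-subalgebra of L generated by the f_i. Let p be a prime ideal of A with residue field κ(p), and let v be a valuation on K which is trivial on k and extends to a valuation v' on κ(p) with v'(f_i mod p) ≤ 1 for all i. Then v extends to a valuation w on L which is trivial on k and satisfies w(f_i) ≤ 1 for all i. -/

import Mathlib

/-!
Identify `κ(p)` with the residue field of `A_p` and pull the valuation ring of `v'` back along
`A_p → κ(p)`. Because the kernel of that map is the maximal ideal of `A_p`, the pull-back `R` is a
local ring whose units are the elements of value `1`, so by Chevalley's theorem some valuation ring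
`B` of `L` dominates the image of `R`. The valuation `w` of `B` is then `≤ 1` wherever `v'` is and
`< 1` wherever `v'` is; on `K` this forces `w` to be equivalent to `v`, which gives triviality on
`k`, and `w(fᵢ) ≤ 1` because `fᵢ ∈ R`.
-/

open IsLocalRing

namespace Valuation

theorem isEquiv_of_le_one_of_lt_one {K : Type*} [Field K] {Γ₁ Γ₂ : Type*}
    [LinearOrderedCommGroupWithZero Γ₁] [LinearOrderedCommGroupWithZero Γ₂]
    {u : Valuation K Γ₁} {v : Valuation K Γ₂} (hle : ∀ x, v x ≤ 1 → u x ≤ 1)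
    (hlt : ∀ x, v x < 1 → u x < 1) : u.IsEquiv v := by
  refine isEquiv_of_val_le_one fun x ↦ ⟨fun hx ↦ ?_, hle x⟩
  by_contra! h
  have hx0 : x ≠ 0 := by rintro rfl; simp at h
  exact ((u.one_lt_val_iff hx0).mpr (hlt _ ((v.one_lt_val_iff hx0).mp h))).not_ge hx

variable {O : Type*} [CommRing O] [IsLocalRing O] {Γ : Type*} [LinearOrderedCommGroupWithZero Γ]
  {w : Valuation O Γ}

theorem isUnit_integer_iff (hw : maximalIdeal O ≤ w.supp) {x : w.integer} :
    IsUnit x ↔ w x = 1 := by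
  refine ⟨(integer.integers w).one_of_isUnit, fun hx ↦ (integer.integers w).isUnit_of_one ?_ hx⟩
  exact notMem_maximalIdeal.mp fun hm ↦ one_ne_zero (hx.symm.trans ((mem_supp_iff w _).mp (hw hm)))

theorem isLocalRing_integer (hw : maximalIdeal O ≤ w.supp) : IsLocalRing w.integer := by
  have : Nontrivial w.integer := (integers_nontrivial w).mpr inferInstance
  have hlt {x : w.integer} (hx : x ∈ nonunits _) : w x < 1 :=
    lt_of_le_of_ne x.2 fun h ↦ hx ((isUnit_integer_iff hw).mpr h)
  refine .of_nonunits_add fun a b ha hb hab ↦ ?_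
  exact ((w.map_add a b).trans_lt (max_lt (hlt ha) (hlt hb))).ne ((isUnit_integer_iff hw).mp hab)

variable {L : Type*} [Field L]

theorem exists_valuationSubring_dominating (hw : maximalIdeal O ≤ w.supp) (g : O →+* L) :
    ∃ B : ValuationSubring L, ∀ x, (w x ≤ 1 → B.valuation (g x) ≤ 1) ∧
      (w x < 1 → B.valuation (g x) < 1) := by
  have := isLocalRing_integer hw
  obtain ⟨B, hB, hloc⟩ := exists_factor_valuationRing (g.comp w.integer.subtype)
  refine ⟨B, fun x ↦ ⟨fun hx ↦ (B.valuation_le_one_iff _).mpr (hB ⟨x, hx⟩), fun hx ↦ ?_⟩⟩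
  have hnu : ¬IsUnit (⟨x, hx.le⟩ : w.integer) := fun h ↦ hx.ne ((isUnit_integer_iff hw).mp h)
  exact (B.valuation_lt_one_iff _).mp fun h ↦ hnu (hloc.map_nonunit _ h)

theorem exists_valuationSubring_dominating_fractionRing_quotient {A : Type*} [CommRing A]
    [Algebra A L] [FaithfulSMul A L] (p : Ideal A) [p.IsPrime]
    (v : Valuation (FractionRing (A ⧸ p)) Γ) :
    ∃ B : ValuationSubring L, ∀ a : A,
      (v (algebraMap _ _ (Ideal.Quotient.mk p a)) ≤ 1 → B.valuation (algebraMap A L a) ≤ 1) ∧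
      (v (algebraMap _ _ (Ideal.Quotient.mk p a)) < 1 → B.valuation (algebraMap A L a) < 1) := by
  let e := (FractionRing.algEquiv (A ⧸ p) p.ResidueField).symm
  let φ : Localization.AtPrime p →+* FractionRing (A ⧸ p) := e.toRingHom.comp (residue _)
  have hφ (a : A) : φ (algebraMap A _ a) = algebraMap (A ⧸ p) _ (Ideal.Quotient.mk p a) := by
    change e (residue _ (algebraMap A _ a)) = _
    rw [← ResidueField.algebraMap_eq, ← IsScalarTower.algebraMap_apply,
      ← Ideal.algebraMap_quotient_residueField_mk]
    exact e.commutes _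
  have hsupp : maximalIdeal _ ≤ (v.comap φ).supp := fun x hx ↦ by
    simp [φ, (residue_eq_zero_iff x).mpr hx]
  let g : Localization.AtPrime p →+* L :=
    IsLocalization.lift (M := p.primeCompl) (g := algebraMap A L) fun s ↦ isUnit_iff_ne_zero.mpr
      fun h ↦ s.2 ((FaithfulSMul.algebraMap_eq_zero_iff A L).mp h ▸ p.zero_mem)
  obtain ⟨B, hB⟩ := (v.comap φ).exists_valuationSubring_dominating hsupp g
  refine ⟨B, fun a ↦ ?_⟩
  simpa only [comap_apply, hφ, g, IsLocalization.lift_eq] using hB (algebraMap A _ a)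

end Valuation

theorem stmt13.{u} (k K L : Type u) [Field k] [Field K] [Field L]
    [Algebra k K] [Algebra K L] [Algebra k L] [IsScalarTower k K L]
    (n : ℕ) (f : Fin n → L)
    (A : Subalgebra K L) (hA : A = Algebra.adjoin K (Set.range f))
    (p : Ideal A) (hp : p.IsPrime)
    (Γ : Type u) [LinearOrderedCommGroupWithZero Γ]
    (v : Valuation K Γ)
    (htriv : ∀ a : k, a ≠ 0 → v (algebraMap k K a) = 1)
    (v' : Valuation (FractionRing (A ⧸ p)) Γ)
    (hv'ext : ∀ a : K,
      v' (algebraMap (A ⧸ p) (FractionRing (A ⧸ p))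
        (Ideal.Quotient.mk p (algebraMap K A a))) = v a)
    (hv'f : ∀ i : Fin n,
      v' (algebraMap (A ⧸ p) (FractionRing (A ⧸ p))
        (Ideal.Quotient.mk p ⟨f i, hA ▸ Algebra.subset_adjoin (Set.mem_range_self i)⟩)) ≤ 1) :
    ∃ (Γ' : Type u) (_ : LinearOrderedCommGroupWithZero Γ') (w : Valuation L Γ'),
      (w.comap (algebraMap K L)).IsEquiv v ∧
      (∀ a : k, a ≠ 0 → w (algebraMap k L a) = 1) ∧
      (∀ i : Fin n, w (f i) ≤ 1) := by
  obtain ⟨B, hB⟩ := v'.exists_valuationSubring_dominating_fractionRing_quotient (L := L) p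
  have hequiv : (B.valuation.comap (algebraMap K L)).IsEquiv v :=
    Valuation.isEquiv_of_le_one_of_lt_one
      (fun a ha ↦ (hB (algebraMap K A a)).1 ((hv'ext a).trans_le ha))
      (fun a ha ↦ (hB (algebraMap K A a)).2 ((hv'ext a).trans_lt ha))
  refine ⟨B.ValueGroup, inferInstance, B.valuation, hequiv, fun a ha ↦ ?_,
    fun i ↦ (hB _).1 (hv'f i)⟩
  rw [IsScalarTower.algebraMap_apply k K L]
  exact Valuation.isEquiv_iff_val_eq_one.mp hequiv |>.mpr (htriv a ha)
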